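/- arXiv:2303.07881 — 3 statements merged into one kernel-verified Lean document; each statement's English description precedes it below -/
import Mathlib

section
/- With the setup of the previous statement, every element f ∈ C decomposes as f = ∑_{j=0}^{n−1} θ_j(y)·f(x, ζ^j), where f(x, ζ^j) ∈ C_j denotes the element of R[x]/⟨x^m−1⟩ obtained by substituting ζ^j for y. Consequently, if for each j the ideal C_j of R[x]/⟨x^m−1⟩ is generated by polynomials p_0^{(j)}(x), …, p_{r_j}^{(j)}(x), then C is generated as an ideal of S by the set { θ_j(y)·p_i^{(j)}(x) : 0 ≤ i ≤ r_j, 0 ≤ j ≤ n−1 }. -/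
/-!
The `θ_j` are the idempotents splitting `y^n - 1 = ∏_j (y - ζ^j)`. Writing `θ_j` as the
geometric sum in `ζ^{n-j} y` shows that `(y - ζ^j) θ_j` is a multiple of `y^n - 1`, so
`θ_j f(x, y) = θ_j f(x, ζ^j)`. The orthogonality relation `∑_j ζ^{(n-j)k} = 0` for `0 < k < n`
(here `ζ^k - 1` must be a unit) gives `∑_j θ_j = 1`. Multiplying `f` by this sum yields the
decomposition, and `θ_j f(x, ζ^j) = θ_j f ∈ C` puts `f(x, ζ^j)` in `C_j`; so the `θ_j p_i^{(j)}`
lie in `C` and generate every `f ∈ C`.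
-/

open Polynomial

/-- `R[x]/⟨x^m - 1⟩`. -/
abbrev Amod (R : Type*) [CommRing R] (m : ℕ) :=
  Polynomial R ⧸ Ideal.span ({X ^ m - 1} : Set (Polynomial R))

noncomputable instance (R : Type*) [CommRing R] (m : ℕ) : CommRing (Amod R m) :=
  Ideal.Quotient.commRing _

/-- `S = (R[x]/⟨x^m - 1⟩)[y]/⟨y^n - 1⟩`. -/
abbrev Smod (R : Type*) [CommRing R] (m n : ℕ) :=
  Polynomial (Amod R m) ⧸ Ideal.span ({X ^ n - 1} : Set (Polynomial (Amod R m)))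

/-- The image of `ζ ∈ R` in `R[x]/⟨x^m - 1⟩`. -/
noncomputable def zetaA {R : Type*} [CommRing R] (m : ℕ) (ζ : R) : Amod R m :=
  Ideal.Quotient.mk _ (C ζ)

/-- The idempotent `θ_j(y) = (1/n) ∑_{k=0}^{n-1} ζ^{(n-j)k} y^k` as an element of `S`. -/
noncomputable def theta {A : Type*} [CommRing A] (n : ℕ) (ζ : A) (j : ℕ) :
    Polynomial A ⧸ Ideal.span ({X ^ n - 1} : Set (Polynomial A)) :=
  Ideal.Quotient.mk _ (C (Ring.inverse (n : A)) *
    ∑ k ∈ Finset.range n, C (ζ ^ ((n - j) * k)) * X ^ k)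

open Finset

theorem Ideal.mul_map_mem_span_image {A S : Type*} [CommRing A] [CommRing S] (ι : A →+* S)
    (θ : S) {s : Set A} {a : A} (ha : a ∈ Ideal.span s) :
    θ * ι a ∈ Ideal.span ((fun b => θ * ι b) '' s) := by
  have h : ι a ∈ Ideal.span (ι '' s) := Ideal.map_span ι s ▸ Ideal.mem_map_of_mem ι ha
  have := Ideal.mul_mem_mul (Ideal.mem_span_singleton_self θ) h
  rwa [Ideal.span_mul_span', Set.singleton_mul, Set.image_image] at this

section Theta

variable {A : Type*} [CommRing A] {n : ℕ} {ζ : A}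

theorem geom_sum_eq_zero_of_pow_eq_one {x : A} (hx : x ^ n = 1) (hx1 : IsUnit (x - 1)) :
    ∑ i ∈ range n, x ^ i = 0 :=
  hx1.mul_left_eq_zero.mp (by rw [geom_sum_mul, hx, sub_self])

theorem sum_range_pow_sub_mul_eq_ite (hζ : ζ ^ n = 1)
    (hd : ∀ k, 0 < k → k < n → IsUnit (ζ ^ k - 1)) {k : ℕ} (hk : k < n) :
    ∑ j ∈ range n, ζ ^ ((n - j) * k) = if k = 0 then (n : A) else 0 := by
  rcases Nat.eq_zero_or_pos k with rfl | hk0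
  · simp
  have hζk : (ζ ^ k) ^ n = 1 := by rw [← pow_mul, mul_comm, pow_mul, hζ, one_pow]
  calc ∑ j ∈ range n, ζ ^ ((n - j) * k)
      = ∑ j ∈ range n, (ζ ^ k) ^ (n - 1 - j + 1) :=
        sum_congr rfl fun j hj => by
          rw [mul_comm, pow_mul]
          congr 1
          have := mem_range.mp hj
          omega
    _ = ζ ^ k * ∑ i ∈ range n, (ζ ^ k) ^ i := by
        rw [sum_range_reflect (fun i => (ζ ^ k) ^ (i + 1)) n, mul_sum]
        simp only [pow_succ']
    _ = if k = 0 then (n : A) else 0 := by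
        rw [geom_sum_eq_zero_of_pow_eq_one hζk (hd k hk0 hk), mul_zero, if_neg hk0.ne']

theorem sum_theta_eq_one (hn : 0 < n) (hu : IsUnit (n : A)) (hζ : ζ ^ n = 1)
    (hd : ∀ k, 0 < k → k < n → IsUnit (ζ ^ k - 1)) :
    ∑ j ∈ range n, theta n ζ j = 1 := by
  have hsum : ∑ j ∈ range n, ∑ k ∈ range n, C (ζ ^ ((n - j) * k)) * X ^ k = C (n : A) := by
    rw [sum_comm]
    simp_rw [← sum_mul, ← map_sum]
    rw [sum_congr rfl fun k hk => by rw [sum_range_pow_sub_mul_eq_ite hζ hd (mem_range.mp hk)]]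
    simp [apply_ite C, ite_mul, mem_range.mpr hn]
  simp only [theta]
  rw [← map_sum, ← mul_sum, hsum, ← C_mul, Ring.inverse_mul_cancel _ hu, C_1, map_one]

theorem mk_X_sub_C_mul_theta (hζ : ζ ^ n = 1) {j : ℕ} (hj : j ≤ n) :
    Ideal.Quotient.mk _ (X - C (ζ ^ j)) * theta n ζ j = 0 := by
  set w : A[X] := C (ζ ^ (n - j)) * X
  have hθ : ∑ k ∈ range n, C (ζ ^ ((n - j) * k)) * X ^ k = ∑ k ∈ range n, w ^ k :=
    sum_congr rfl fun k _ => by rw [mul_pow, ← C_pow, ← pow_mul]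
  have hX : X - C (ζ ^ j) = C (ζ ^ j) * (w - 1) := by
    rw [mul_sub, mul_one, ← mul_assoc, ← C_mul, ← pow_add, Nat.add_sub_cancel' hj, hζ, C_1,
      one_mul]
  have hw : w ^ n = X ^ n := by
    rw [mul_pow, ← C_pow, ← pow_mul, mul_comm (n - j), pow_mul, hζ, one_pow, C_1, one_mul]
  rw [theta, ← map_mul, Ideal.Quotient.eq_zero_iff_mem, Ideal.mem_span_singleton]
  refine ⟨C (ζ ^ j) * C (Ring.inverse (n : A)), ?_⟩
  rw [hθ, hX, ← hw, ← geom_sum_mul]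
  ring

theorem theta_mul_mk (hζ : ζ ^ n = 1) {j : ℕ} (hj : j ≤ n) (F : A[X]) :
    theta n ζ j * Ideal.Quotient.mk _ F
      = theta n ζ j * Ideal.Quotient.mk _ (C (F.eval (ζ ^ j))) := by
  obtain ⟨q, hq⟩ := X_sub_C_dvd_sub_C_eval (p := F) (a := ζ ^ j)
  rw [← sub_eq_zero, ← mul_sub, ← map_sub, hq, map_mul, ← mul_assoc, mul_comm (theta n ζ j),
    mk_X_sub_C_mul_theta hζ hj, zero_mul]

theorem mk_eq_sum_theta_mul (hn : 0 < n) (hu : IsUnit (n : A)) (hζ : ζ ^ n = 1)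
    (hd : ∀ k, 0 < k → k < n → IsUnit (ζ ^ k - 1)) (F : A[X]) :
    Ideal.Quotient.mk (Ideal.span {X ^ n - 1}) F =
      ∑ j ∈ range n, theta n ζ j * Ideal.Quotient.mk _ (C (F.eval (ζ ^ j))) := by
  calc Ideal.Quotient.mk _ F
      = (∑ j ∈ range n, theta n ζ j) * Ideal.Quotient.mk _ F := by
        rw [sum_theta_eq_one hn hu hζ hd, one_mul]
    _ = _ := by
        rw [sum_mul]
        exact sum_congr rfl fun j hj => theta_mul_mk hζ (mem_range.mp hj).le F

theorem mk_C_eval_mul_theta_mem (hζ : ζ ^ n = 1) {I : Ideal (A[X] ⧸ Ideal.span {X ^ n - 1})}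
    {F : A[X]} (hF : Ideal.Quotient.mk _ F ∈ I) {j : ℕ} (hj : j ≤ n) :
    Ideal.Quotient.mk _ (C (F.eval (ζ ^ j))) * theta n ζ j ∈ I := by
  rw [mul_comm, ← theta_mul_mk hζ hj]
  exact I.mul_mem_left _ hF

theorem eq_span_theta_mul_of_components (hn : 0 < n) (hu : IsUnit (n : A)) (hζ : ζ ^ n = 1)
    (hd : ∀ k, 0 < k → k < n → IsUnit (ζ ^ k - 1)) (I : Ideal (A[X] ⧸ Ideal.span {X ^ n - 1}))
    (r : ℕ → ℕ) (p : ℕ → ℕ → A)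
    (hp : ∀ j < n, {g : A | Ideal.Quotient.mk _ (C g) * theta n ζ j ∈ I} =
      ↑(Ideal.span {a : A | ∃ i ≤ r j, a = p j i})) :
    I = Ideal.span
      {s | ∃ j < n, ∃ i ≤ r j, s = theta n ζ j * Ideal.Quotient.mk _ (C (p j i))} := by
  apply le_antisymm
  · intro f hf
    obtain ⟨F, rfl⟩ := Ideal.Quotient.mk_surjective f
    rw [mk_eq_sum_theta_mul hn hu hζ hd F]
    refine Ideal.sum_mem _ fun j hj => ?_
    have hj := mem_range.mp hj
    have hev : F.eval (ζ ^ j) ∈ Ideal.span {a : A | ∃ i ≤ r j, a = p j i} := by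
      rw [← SetLike.mem_coe, ← hp j hj]
      exact mk_C_eval_mul_theta_mem hζ hf hj.le
    have h := Ideal.mul_map_mem_span_image
      ((Ideal.Quotient.mk (Ideal.span {X ^ n - 1})).comp C) (theta n ζ j) hev
    simp only [RingHom.comp_apply] at h
    refine Ideal.span_mono ?_ h
    rintro _ ⟨_, ⟨i, hi, rfl⟩, rfl⟩
    exact ⟨j, hj, i, hi, rfl⟩
  · rw [Ideal.span_le]
    rintro _ ⟨j, hj, i, hi, rfl⟩
    have hmem : p j i ∈ {g : A | Ideal.Quotient.mk _ (C g) * theta n ζ j ∈ I} := by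
      rw [hp j hj]
      exact Ideal.subset_span ⟨i, hi, rfl⟩
    rw [mul_comm]
    exact hmem

end Theta

theorem ideal_decomposition_and_generators_general
    (R : Type*) [CommRing R] (m n : ℕ) (hn : 0 < n)
    (hunit : IsUnit (n : R)) (ζ : R) (hζ : ζ ^ n = 1)
    (hdiff : ∀ i j : ℕ, i ≤ n - 1 → j ≤ n - 1 → i ≠ j → IsUnit (ζ ^ i - ζ ^ j))
    (C : Ideal (Smod R m n)) :
    (∀ F : Polynomial (Amod R m), Ideal.Quotient.mk _ F ∈ C →
      (Ideal.Quotient.mk _ F : Smod R m n) =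
        ∑ j ∈ Finset.range n,
          theta n (zetaA m ζ) j *
            Ideal.Quotient.mk _ (Polynomial.C (F.eval (zetaA m ζ ^ j))) ∧
      ∀ j ∈ Finset.range n,
        Ideal.Quotient.mk _ (Polynomial.C (F.eval (zetaA m ζ ^ j))) *
          theta n (zetaA m ζ) j ∈ C) ∧
    (∀ (r : ℕ → ℕ) (p : ℕ → ℕ → Amod R m),
      (∀ j < n,
        {g : Amod R m |
          Ideal.Quotient.mk _ (Polynomial.C g) * theta n (zetaA m ζ) j ∈ C} =
        ↑(Ideal.span {a : Amod R m | ∃ i ≤ r j, a = p j i})) →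
      C = Ideal.span
        {s : Smod R m n | ∃ j < n, ∃ i ≤ r j,
          s = theta n (zetaA m ζ) j * Ideal.Quotient.mk _ (Polynomial.C (p j i))}) := by
  let φ : R →+* Amod R m := (Ideal.Quotient.mk _).comp Polynomial.C
  have hζA : zetaA m ζ ^ n = 1 := by
    rw [show zetaA m ζ = φ ζ from rfl, ← map_pow, hζ, map_one]
  have huA : IsUnit (n : Amod R m) := map_natCast φ n ▸ hunit.map φ
  have hdA : ∀ k, 0 < k → k < n → IsUnit (zetaA m ζ ^ k - 1) := fun k hk hkn => by
    simpa [φ, zetaA] using (hdiff k 0 (by omega) (by omega) hk.ne').map φ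
  refine ⟨fun F hF => ⟨mk_eq_sum_theta_mul hn huA hζA hdA F, fun j hj => ?_⟩,
    eq_span_theta_mul_of_components hn huA hζA hdA C⟩
  exact mk_C_eval_mul_theta_mem hζA hF (mem_range.mp hj).le

/-- Every `f ∈ C` decomposes as `f = ∑_j θ_j(y)·f(x,ζ^j)` with `f(x,ζ^j) ∈ C_j`; hence
if each `C_j` is generated by `p_0^{(j)}, …, p_{r_j}^{(j)}`, then `C` is generated by
the elements `θ_j(y)·p_i^{(j)}(x)`. -/
theorem ideal_decomposition_and_generators
    (R : Type*) [CommRing R] (m n : ℕ) (hm : 0 < m) (hn : 0 < n)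
    (hunit : IsUnit (n : R)) (ζ : R) (hζ : ζ ^ n = 1)
    (hdiff : ∀ i j : ℕ, i ≤ n - 1 → j ≤ n - 1 → i ≠ j → IsUnit (ζ ^ i - ζ ^ j))
    (C : Ideal (Smod R m n)) :
    (∀ F : Polynomial (Amod R m), Ideal.Quotient.mk _ F ∈ C →
      (Ideal.Quotient.mk _ F : Smod R m n) =
        ∑ j ∈ Finset.range n,
          theta n (zetaA m ζ) j *
            Ideal.Quotient.mk _ (Polynomial.C (F.eval (zetaA m ζ ^ j))) ∧
      ∀ j ∈ Finset.range n,
        Ideal.Quotient.mk _ (Polynomial.C (F.eval (zetaA m ζ ^ j))) *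
          theta n (zetaA m ζ) j ∈ C) ∧
    (∀ (r : ℕ → ℕ) (p : ℕ → ℕ → Amod R m),
      (∀ j < n,
        {g : Amod R m |
          Ideal.Quotient.mk _ (Polynomial.C g) * theta n (zetaA m ζ) j ∈ C} =
        ↑(Ideal.span {a : Amod R m | ∃ i ≤ r j, a = p j i})) →
      C = Ideal.span
        {s : Smod R m n | ∃ j < n, ∃ i ≤ r j,
          s = theta n (zetaA m ζ) j * Ideal.Quotient.mk _ (Polynomial.C (p j i))}) :=
  ideal_decomposition_and_generators_general R m n hn hunit ζ hζ hdiff C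
end

section
/- With the setup of the previous statements, the evaluation map y ↦ ζ^j induces, for each j, a well-defined surjective ring homomorphism ev_j : S = (R[x]/⟨x^m−1⟩)[y]/⟨y^n−1⟩ → R[x]/⟨x^m−1⟩, and for any ideal C of S and 0 ≤ j ≤ n−1, C_j = ev_j(C). -/
open Polynomial

/-!
`θ_j` is an eigenvector of multiplication by `y` with eigenvalue `ζ^j`, because multiplying the
geometric sum `∑ (ζ^{n-j} y)^k` by `ζ^{n-j} y` only permutes its terms cyclically. Hence
`F(y) θ_j = F(ζ^j) θ_j` for every `F`, i.e. `s θ_j = ev_j(s) θ_j` for all `s ∈ S`; together with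
`ev_j θ_j = 1` this shows `g = ev_j(g θ_j)` and `ev_j(s) θ_j = s θ_j`, which are the two inclusions.
-/

theorem image_eq_setOf_mul_mem {S T : Type*} [CommRing S] [CommRing T] (ev : S →+* T)
    (c : T → S) (hc : ∀ t, ev (c t) = t) (θ : S) (hθ : ev θ = 1)
    (hmul : ∀ s, s * θ = c (ev s) * θ) (I : Ideal S) :
    {t | c t * θ ∈ I} = ev '' I := by
  ext t
  constructor
  · intro ht
    exact ⟨c t * θ, ht, by rw [map_mul, hc, hθ, mul_one]⟩
  · rintro ⟨s, hs, rfl⟩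
    rw [Set.mem_ofPred_eq, ← hmul]
    exact I.mul_mem_right θ hs

theorem mul_geom_sum_of_pow_eq_one {S : Type*} [Ring S] {u : S} {n : ℕ} (hu : u ^ n = 1) :
    u * ∑ k ∈ Finset.range n, u ^ k = ∑ k ∈ Finset.range n, u ^ k := by
  have h := mul_geom_sum u n
  rwa [hu, sub_self, sub_mul, one_mul, sub_eq_zero] at h

theorem map_mul_eq_map_C_eval_mul {A S : Type*} [CommRing A] [CommRing S] (φ : A[X] →+* S)
    {α : A} {s : S} (hs : φ X * s = φ (C α) * s) (F : A[X]) :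
    φ F * s = φ (C (F.eval α)) * s := by
  obtain ⟨q, hq⟩ := X_sub_C_dvd_sub_C_eval (a := α) (p := F)
  rw [← sub_eq_zero, ← sub_mul, ← map_sub, hq, map_mul, map_sub, mul_right_comm, sub_mul, hs,
    sub_self, zero_mul]

section CyclicQuotient

variable {A : Type*} [CommRing A] (n : ℕ)

local notation "𝕊" => A[X] ⧸ Ideal.span ({X ^ n - 1} : Set A[X])

theorem mk_X_pow_eq_one : Ideal.Quotient.mk (Ideal.span ({X ^ n - 1} : Set A[X])) (X ^ n) = 1 := by
  rw [← map_one (Ideal.Quotient.mk _), Ideal.Quotient.mk_eq_mk_iff_sub_mem]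
  exact Ideal.mem_span_singleton_self _

noncomputable def evalRootOfUnity (α : A) (hα : α ^ n = 1) : 𝕊 →+* A :=
  Ideal.Quotient.lift _ (evalRingHom α) fun F hF => by
    obtain ⟨q, rfl⟩ := Ideal.mem_span_singleton'.mp hF
    simp [hα]

theorem evalRootOfUnity_mk {α : A} (hα : α ^ n = 1) (F : A[X]) :
    evalRootOfUnity n α hα (Ideal.Quotient.mk _ F) = F.eval α :=
  rfl

theorem evalRootOfUnity_surjective {α : A} (hα : α ^ n = 1) :
    Function.Surjective (evalRootOfUnity n α hα) :=
  fun a => ⟨Ideal.Quotient.mk _ (C a), eval_C⟩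

variable {n}

theorem mk_X_mul_theta {ζ : A} (hζ : ζ ^ n = 1) {j : ℕ} (hj : j ≤ n) :
    Ideal.Quotient.mk _ X * theta n ζ j = Ideal.Quotient.mk _ (C (ζ ^ j)) * theta n ζ j := by
  set mk := Ideal.Quotient.mk (Ideal.span ({X ^ n - 1} : Set A[X]))
  set u := mk (C (ζ ^ (n - j)) * X)
  have hinv : ζ ^ j * ζ ^ (n - j) = 1 := by rw [← pow_add, Nat.add_sub_cancel' hj, hζ]
  have hu : u ^ n = 1 := by
    rw [← map_pow, mul_pow, ← C_pow, ← pow_mul, pow_mul', hζ, one_pow, C_1, one_mul,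
      mk_X_pow_eq_one]
  have htheta : theta n ζ j = mk (C (Ring.inverse (n : A))) * ∑ k ∈ Finset.range n, u ^ k := by
    rw [theta, map_mul, map_sum]
    refine congrArg _ (Finset.sum_congr rfl fun k _ => ?_)
    rw [← map_pow, mul_pow, ← C_pow, ← pow_mul, map_mul]
  calc mk X * theta n ζ j = mk (C (ζ ^ j)) * (u * theta n ζ j) := by
        rw [← mul_assoc, ← map_mul, ← mul_assoc, ← C_mul, hinv, C_1, one_mul]
    _ = mk (C (ζ ^ j)) * theta n ζ j := by
        rw [htheta, mul_left_comm u, mul_geom_sum_of_pow_eq_one hu]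

theorem evalRootOfUnity_theta (hn : IsUnit (n : A)) {ζ : A} (hζ : ζ ^ n = 1) {j : ℕ}
    (hj : j ≤ n) (hζj : (ζ ^ j) ^ n = 1) :
    evalRootOfUnity n (ζ ^ j) hζj (theta n ζ j) = 1 := by
  have hterm : ∀ k, ζ ^ ((n - j) * k) * (ζ ^ j) ^ k = 1 := fun k => by
    rw [pow_mul, ← mul_pow, ← pow_add, Nat.sub_add_cancel hj, hζ, one_pow]
  simp only [theta, evalRootOfUnity_mk, eval_mul, eval_C, eval_finsetSum, eval_pow, eval_X,
    hterm, Finset.sum_const, Finset.card_range, nsmul_eq_mul, mul_one, Ring.inverse_mul_cancel _ hn]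

end CyclicQuotient

theorem evaluation_map_and_Cj_general
    (R : Type*) [CommRing R] (m n : ℕ)
    (hunit : IsUnit (n : R)) (ζ : R) (hζ : ζ ^ n = 1)
    (j : ℕ) (hj : j ≤ n - 1) :
    ∃ ev : Smod R m n →+* Amod R m,
      (∀ F : Polynomial (Amod R m),
        ev (Ideal.Quotient.mk _ F) = F.eval (zetaA m ζ ^ j)) ∧
      Function.Surjective ev ∧
      ∀ C : Ideal (Smod R m n),
        {g : Amod R m |
          Ideal.Quotient.mk _ (Polynomial.C g) * theta n (zetaA m ζ) j ∈ C} =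
        ev '' (C : Set (Smod R m n)) := by
  have hjn : j ≤ n := by omega
  have hδ : zetaA m ζ ^ n = 1 := by rw [zetaA, ← map_pow, ← C_pow, hζ, C_1, map_one]
  have hδj : (zetaA m ζ ^ j) ^ n = 1 := by rw [pow_right_comm, hδ, one_pow]
  have hnA : IsUnit (n : Amod R m) := by
    simpa using hunit.map ((Ideal.Quotient.mk (Ideal.span {X ^ m - 1})).comp C)
  set ev := evalRootOfUnity n (zetaA m ζ ^ j) hδj
  refine ⟨ev, evalRootOfUnity_mk n hδj, evalRootOfUnity_surjective n hδj, fun I => ?_⟩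
  refine image_eq_setOf_mul_mem ev _ (fun _ => eval_C) _
    (evalRootOfUnity_theta hnA hδ hjn hδj) (fun s => ?_) I
  obtain ⟨F, rfl⟩ := Ideal.Quotient.mk_surjective s
  exact map_mul_eq_map_C_eval_mul _ (mk_X_mul_theta hδ hjn) F

/-- The evaluation `y ↦ ζ^j` induces a well-defined surjective ring homomorphism
`ev_j : S → R[x]/⟨x^m-1⟩`, and for every ideal `C` of `S`, `C_j = ev_j(C)`. -/
theorem evaluation_map_and_Cj
    (R : Type*) [CommRing R] (m n : ℕ) (hm : 0 < m) (hn : 0 < n)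
    (hunit : IsUnit (n : R)) (ζ : R) (hζ : ζ ^ n = 1)
    (hdiff : ∀ i j : ℕ, i ≤ n - 1 → j ≤ n - 1 → i ≠ j → IsUnit (ζ ^ i - ζ ^ j))
    (j : ℕ) (hj : j ≤ n - 1) :
    ∃ ev : Smod R m n →+* Amod R m,
      (∀ F : Polynomial (Amod R m),
        ev (Ideal.Quotient.mk _ F) = F.eval (zetaA m ζ ^ j)) ∧
      Function.Surjective ev ∧
      ∀ C : Ideal (Smod R m n),
        {g : Amod R m |
          Ideal.Quotient.mk _ (Polynomial.C g) * theta n (zetaA m ζ) j ∈ C} =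
        ev '' (C : Set (Smod R m n)) :=
  evaluation_map_and_Cj_general R m n hunit ζ hζ j hj
end

section
/- Let R be a finite commutative chain ring with residue field F_q and reduction map ¯ : R[x] → F_q[x]. If g ∈ R[x] is monic and its reduction ḡ factors in F_q[x] as a product f_1 f_2 ⋯ f_m of pairwise coprime monic polynomials, then there exist monic, pairwise coprime polynomials g_1, …, g_m ∈ R[x] with g = g_1 g_2 ⋯ g_m and ḡ_i = f_i for each i. -/
open Polynomial

section Auxiliary

variable {R : Type*} [CommRing R] [Fintype R] [IsLocalRing R]

lemma maxIdeal_nilpotent' : ∃ n : ℕ, (IsLocalRing.maximalIdeal R) ^ n = ⊥ := by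
  have h := IsArtinianRing.isNilpotent_jacobson_bot (R := R)
  rw [IsLocalRing.jacobson_eq_maximalIdeal ⊥ bot_ne_top] at h
  exact h

lemma mem_map_C_iff_map_eq_zero' {S : Type*} [CommRing S] (N : Ideal S) (p : Polynomial S) :
    p ∈ Ideal.map (C : S →+* Polynomial S) N ↔ p.map (Ideal.Quotient.mk N) = 0 := by
  rw [Ideal.mem_map_C_iff, Polynomial.ext_iff]
  simp [coeff_map, Ideal.Quotient.eq_zero_iff_mem]

lemma isUnit_of_map_residue_eq_one' {p : Polynomial R}
    (hp : p.map (IsLocalRing.residue R) = 1) : IsUnit p := by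
  obtain ⟨n, hn⟩ := maxIdeal_nilpotent' (R := R)
  have hmem : ∀ r : R, IsLocalRing.residue R r = 0 → IsNilpotent r := by
    intro r hr
    have hr' : r ∈ IsLocalRing.maximalIdeal R := Ideal.Quotient.eq_zero_iff_mem.mp hr
    exact ⟨n, by simpa [hn] using Ideal.pow_mem_pow hr' n⟩
  rw [Polynomial.isUnit_iff_coeff_isUnit_isNilpotent]
  constructor
  · have h0 : IsLocalRing.residue R (p.coeff 0) = 1 := by
      have := congrArg (fun q => Polynomial.coeff q 0) hp
      simpa using this
    have hnil : IsNilpotent (p.coeff 0 - 1) := hmem _ (by simp [map_sub, h0])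
    simpa using hnil.isUnit_add_one
  · intro i hi
    refine hmem _ ?_
    have := congrArg (fun q => Polynomial.coeff q i) hp
    simpa [coeff_one, hi] using this

lemma isCoprime_of_isCoprime_map' {p q : Polynomial R}
    (h : IsCoprime (p.map (IsLocalRing.residue R)) (q.map (IsLocalRing.residue R))) :
    IsCoprime p q := by
  obtain ⟨u, v, huv⟩ := h
  obtain ⟨U, hU⟩ := Polynomial.map_surjective _ IsLocalRing.residue_surjective u
  obtain ⟨V, hV⟩ := Polynomial.map_surjective _ IsLocalRing.residue_surjective v
  have hunit : IsUnit (U * p + V * q) := by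
    apply isUnit_of_map_residue_eq_one'
    simp only [Polynomial.map_add, Polynomial.map_mul, hU, hV]
    exact huv
  obtain ⟨c, hc⟩ := hunit
  refine ⟨(↑c⁻¹ : Polynomial R) * U, (↑c⁻¹ : Polynomial R) * V, ?_⟩
  calc (↑c⁻¹ : Polynomial R) * U * p + (↑c⁻¹ : Polynomial R) * V * q
      = (↑c⁻¹ : Polynomial R) * (U * p + V * q) := by ring
    _ = (↑c⁻¹ : Polynomial R) * (c : Polynomial R) := by rw [hc]
    _ = 1 := c.inv_mul

lemma hensel_pair' (g : Polynomial R) (hg : g.Monic)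
    (f₁ f₂ : Polynomial (IsLocalRing.ResidueField R)) (h1 : f₁.Monic) (h2 : f₂.Monic)
    (hcop : IsCoprime f₁ f₂)
    (hfact : g.map (IsLocalRing.residue R) = f₁ * f₂) :
    ∃ a b : Polynomial R, a.Monic ∧ b.Monic ∧ g = a * b ∧
      a.map (IsLocalRing.residue R) = f₁ ∧ b.map (IsLocalRing.residue R) = f₂ := by
  obtain ⟨n, hn⟩ := maxIdeal_nilpotent' (R := R)
  set π := IsLocalRing.residue R with hπdef
  set M := IsLocalRing.maximalIdeal R with hMdef
  have hmap0 : ∀ (k : ℕ), 1 ≤ k → ∀ p : Polynomial R,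
      p ∈ Ideal.map (C : R →+* Polynomial R) (M ^ k) → p.map π = 0 := by
    intro k hk p hp
    rw [Ideal.mem_map_C_iff] at hp
    ext i
    simp only [coeff_map, coeff_zero]
    exact Ideal.Quotient.eq_zero_iff_mem.mpr (Ideal.pow_le_self (by omega) (hp i))
  have main : ∀ j k, 1 ≤ k → n ≤ k + j → ∀ a b : Polynomial R, a.Monic → b.Monic →
      a.map π = f₁ → b.map π = f₂ → a.degree + b.degree = g.degree →
      (g - a * b ∈ Ideal.map (C : R →+* Polynomial R) (M ^ k)) →
      ∃ a' b' : Polynomial R, a'.Monic ∧ b'.Monic ∧ g = a' * b' ∧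
        a'.map π = f₁ ∧ b'.map π = f₂ := by
    intro j
    induction j with
    | zero =>
      intro k hk1 hkn a b ha hb hmapa hmapb hdeg he
      have hMk : M ^ k = ⊥ := le_bot_iff.mp (hn ▸ Ideal.pow_le_pow_right (by omega))
      rw [hMk, Ideal.map_bot, Ideal.mem_bot] at he
      exact ⟨a, b, ha, hb, (sub_eq_zero.mp he), hmapa, hmapb⟩
    | succ j ih =>
      intro k hk1 hkn a b ha hb hmapa hmapb hdeg he
      by_cases he0 : g - a * b = 0
      · exact ⟨a, b, ha, hb, (sub_eq_zero.mp he0), hmapa, hmapb⟩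
      obtain ⟨u, v, huv⟩ := hcop
      obtain ⟨U, hU⟩ := Polynomial.map_surjective _ IsLocalRing.residue_surjective u
      obtain ⟨V, hV⟩ := Polynomial.map_surjective _ IsLocalRing.residue_surjective v
      have hcunit : IsUnit (U * a + V * b) := by
        apply isUnit_of_map_residue_eq_one'
        simp only [Polynomial.map_add, Polynomial.map_mul, hU, hV, ← hπdef, hmapa, hmapb]
        rw [show map π U = u from hU, show map π V = v from hV]
        exact huv
      obtain ⟨c, hc⟩ := hcunit
      set w : Polynomial R := (↑c⁻¹ : Polynomial R) * V with hwdef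
      set z : Polynomial R := (↑c⁻¹ : Polynomial R) * U with hzdef
      have hwz : w * b + z * a = 1 := by
        calc w * b + z * a = (↑c⁻¹ : Polynomial R) * (U * a + V * b) := by
              rw [hwdef, hzdef]; ring
          _ = (↑c⁻¹ : Polynomial R) * (c : Polynomial R) := by rw [hc]
          _ = 1 := c.inv_mul
      set e := g - a * b with he_def
      set s := (w * e) %ₘ a with hs_def
      set t := e * z + ((w * e) /ₘ a) * b with ht_def
      have hkey : a * t + s * b = e := by
        have hd : s + a * ((w * e) /ₘ a) = w * e := modByMonic_add_div (w * e) a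
        calc a * t + s * b = (s + a * ((w * e) /ₘ a)) * b + e * (z * a) := by
              rw [ht_def]; ring
          _ = e * (w * b + z * a) := by rw [hd]; ring
          _ = e := by rw [hwz, mul_one]
      -- ideal memberships
      have hwe : w * e ∈ Ideal.map (C : R →+* Polynomial R) (M ^ k) :=
        Ideal.mul_mem_left _ _ he
      have hs : s ∈ Ideal.map (C : R →+* Polynomial R) (M ^ k) := by
        rw [mem_map_C_iff_map_eq_zero'] at hwe ⊢
        rw [hs_def, Polynomial.map_modByMonic _ ha, hwe, zero_modByMonic]
      have hq : (w * e) /ₘ a ∈ Ideal.map (C : R →+* Polynomial R) (M ^ k) := by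
        rw [mem_map_C_iff_map_eq_zero'] at hwe ⊢
        rw [Polynomial.map_divByMonic _ ha, hwe, zero_divByMonic]
      have ht : t ∈ Ideal.map (C : R →+* Polynomial R) (M ^ k) :=
        add_mem (Ideal.mul_mem_right _ _ he) (Ideal.mul_mem_right _ _ hq)
      have hst : s * t ∈ Ideal.map (C : R →+* Polynomial R) (M ^ (k + 1)) := by
        have h2k : s * t ∈ Ideal.map (C : R →+* Polynomial R) (M ^ k * M ^ k) := by
          rw [Ideal.map_mul]
          exact Ideal.mul_mem_mul hs ht
        refine Ideal.map_mono ?_ h2k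
        rw [← pow_add]
        exact Ideal.pow_le_pow_right (by omega)
      -- degrees
      have hbne : b ≠ 0 := hb.ne_zero
      have hane : a ≠ 0 := ha.ne_zero
      have hs_deg : s.degree < a.degree := degree_modByMonic_lt _ ha
      have ha' : (a + s).Monic := ha.add_of_left hs_deg
      have hdega' : (a + s).degree = a.degree := degree_add_eq_left_of_degree_lt hs_deg
      have hdegab : (a * b).degree = g.degree := by
        rw [hb.degree_mul, hdeg]
      have hedeg : e.degree < g.degree := by
        refine degree_sub_lt hdegab.symm hg.ne_zero ?_
        rw [hg.leadingCoeff, (ha.mul hb).leadingCoeff]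
      have ht_deg : t.degree < b.degree := by
        have hat : a * t = e - s * b := eq_sub_of_add_eq hkey
        by_cases ht0 : t = 0
        · rw [ht0, degree_zero]
          exact Ne.bot_lt (fun hbb => hbne (degree_eq_bot.mp hbb))
        · have h1 : t.degree + a.degree = (e - s * b).degree := by
            rw [← ha.degree_mul, mul_comm t a, hat]
          have h2 : (e - s * b).degree < b.degree + a.degree := by
            refine lt_of_le_of_lt (degree_sub_le _ _) (max_lt ?_ ?_)
            · rw [← hdeg, add_comm] at hedeg; exact hedeg
            · refine lt_of_le_of_lt (degree_mul_le _ _) ?_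
              rw [add_comm b.degree a.degree]
              exact WithBot.add_lt_add_right (fun hbb => hbne (degree_eq_bot.mp hbb)) hs_deg
          have h3 : t.degree + a.degree < b.degree + a.degree := by rw [h1]; exact h2
          exact lt_of_add_lt_add_right h3
      have hb' : (b + t).Monic := hb.add_of_left ht_deg
      have hdegb' : (b + t).degree = b.degree := degree_add_eq_left_of_degree_lt ht_deg
      have herr : g - (a + s) * (b + t) ∈ Ideal.map (C : R →+* Polynomial R) (M ^ (k + 1)) := by
        have hrw : g - (a + s) * (b + t) = -(s * t) := by
          linear_combination -hkey - he_def
        rw [hrw]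
        exact neg_mem hst
      have hmaps : (a + s).map π = f₁ := by
        rw [Polynomial.map_add, hmapa, hmap0 k hk1 s hs, add_zero]
      have hmapt : (b + t).map π = f₂ := by
        rw [Polynomial.map_add, hmapb, hmap0 k hk1 t ht, add_zero]
      exact ih (k + 1) (by omega) (by omega) (a + s) (b + t) ha' hb' hmaps hmapt
        (by rw [hdega', hdegb']; exact hdeg) herr
  -- initial monic lifts
  obtain ⟨a₀, ha₀, ha₀d, ha₀m⟩ := Polynomial.lifts_and_degree_eq_and_monic
    ((Polynomial.mem_lifts _).2 (Polynomial.map_surjective _ IsLocalRing.residue_surjective f₁)) h1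
  obtain ⟨b₀, hb₀, hb₀d, hb₀m⟩ := Polynomial.lifts_and_degree_eq_and_monic
    ((Polynomial.mem_lifts _).2 (Polynomial.map_surjective _ IsLocalRing.residue_surjective f₂)) h2
  have hdeg0 : a₀.degree + b₀.degree = g.degree := by
    rw [ha₀d, hb₀d, ← degree_mul, ← hfact, hg.degree_map]
  have he1 : g - a₀ * b₀ ∈ Ideal.map (C : R →+* Polynomial R) (M ^ 1) := by
    rw [pow_one, Ideal.mem_map_C_iff]
    intro i
    have hz : (g - a₀ * b₀).map π = 0 := by
      rw [Polynomial.map_sub, Polynomial.map_mul, hfact, ha₀, hb₀, sub_self]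
    have hci := congrArg (fun p => coeff p i) hz
    simp only [coeff_map, coeff_zero] at hci
    exact Ideal.Quotient.eq_zero_iff_mem.mp hci
  exact main n 1 le_rfl (by omega) a₀ b₀ ha₀m hb₀m ha₀ hb₀ hdeg0 he1

lemma aux_lift' : ∀ (m : ℕ) (g : Polynomial R), g.Monic →
    ∀ (f : Fin m → Polynomial (IsLocalRing.ResidueField R)),
    (∀ i, (f i).Monic) → (∀ i j, i ≠ j → IsCoprime (f i) (f j)) →
    g.map (IsLocalRing.residue R) = ∏ i, f i →
    ∃ G : Fin m → Polynomial R, (∀ i, (G i).Monic) ∧ g = ∏ i, G i ∧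
      ∀ i, (G i).map (IsLocalRing.residue R) = f i := by
  intro m
  induction m with
  | zero =>
    intro g hg f _ _ hfact
    refine ⟨fun i => i.elim0, fun i => i.elim0, ?_, fun i => i.elim0⟩
    have hdg : g.natDegree = 0 := by
      have hnd := hg.natDegree_map (IsLocalRing.residue R)
      rw [hfact] at hnd
      simpa using hnd.symm
    simpa using Polynomial.eq_one_of_monic_natDegree_zero hg hdg
  | succ m ihm =>
    intro g hg f hfm hfc hfact
    have hcop : IsCoprime (f 0) (∏ i : Fin m, f i.succ) :=
      IsCoprime.prod_right fun i _ => hfc 0 i.succ (Fin.succ_ne_zero i).symm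
    have hfact' : g.map (IsLocalRing.residue R) = f 0 * ∏ i : Fin m, f i.succ := by
      rw [hfact, Fin.prod_univ_succ]
    obtain ⟨A, B, hA, hB, hgAB, hmA, hmB⟩ := hensel_pair' g hg (f 0) (∏ i : Fin m, f i.succ)
      (hfm 0) (monic_prod_of_monic _ _ fun i _ => hfm i.succ) hcop hfact'
    obtain ⟨G', hG'm, hG'p, hG'map⟩ := ihm B hB (fun i => f i.succ) (fun i => hfm i.succ)
      (fun i j hij => hfc i.succ j.succ (fun h => hij (Fin.succ_injective _ h))) hmB
    refine ⟨Fin.cases A G', ?_, ?_, ?_⟩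
    · intro i
      refine Fin.cases ?_ ?_ i
      · simpa using hA
      · intro i'; simpa using hG'm i'
    · rw [Fin.prod_univ_succ]
      simp only [Fin.cases_zero, Fin.cases_succ]
      rw [← hG'p]
      exact hgAB
    · intro i
      refine Fin.cases ?_ ?_ i
      · simpa using hmA
      · intro i'; simpa using hG'map i'

end Auxiliary

/-- Over a finite chain ring, a monic polynomial whose reduction modulo the maximal ideal
factors into pairwise coprime monic polynomials lifts to a corresponding factorization into
monic pairwise coprime polynomials. -/
theorem chain_ring_coprime_factorization_lift
    (R : Type*) [CommRing R] [Fintype R] [IsLocalRing R]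
    (hchain : ∀ I J : Ideal R, I ≤ J ∨ J ≤ I)
    (g : Polynomial R) (hg : g.Monic) (m : ℕ)
    (f : Fin m → Polynomial (IsLocalRing.ResidueField R))
    (hfmonic : ∀ i, (f i).Monic)
    (hfcop : ∀ i j, i ≠ j → IsCoprime (f i) (f j))
    (hfact : g.map (IsLocalRing.residue R) = ∏ i, f i) :
    ∃ G : Fin m → Polynomial R,
      (∀ i, (G i).Monic) ∧
      (∀ i j, i ≠ j → IsCoprime (G i) (G j)) ∧
      g = ∏ i, G i ∧
      ∀ i, (G i).map (IsLocalRing.residue R) = f i := by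
  obtain ⟨G, hGm, hGp, hGmap⟩ := aux_lift' m g hg f hfmonic hfcop hfact
  refine ⟨G, hGm, ?_, hGp, hGmap⟩
  intro i j hij
  apply isCoprime_of_isCoprime_map'
  rw [hGmap i, hGmap j]
  exact hfcop i j hij
end
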